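/- Let p ∈ ℝ[t] be squarefree with deg p ≥ 1, and let a11, a12, b11, b12, a21, a22, b21, b22 ∈ ℝ[t] be such that A1 and B1 are coprime in ℝ[t,s], A2 and B2 are coprime in ℝ[t,s], (a12, b12) ≠ (0,0) and (a22, b22) ≠ (0,0) (i.e., both x(t,s) and y(t,s) explicitly depend on s). Then Ξ1 and Ξ2 have no common irreducible factor η ∈ ℝ[t,x] of positive degree in t and of positive degree in x. -/

import Mathlib

/-- The inclusion `ℝ[t] → ℝ[t,x]`, with `ℝ[t,x]` realized as `MvPolynomial (Fin 2) ℝ`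
(variables `0 = t`, `1 = x`). -/
noncomputable def toTX : Polynomial ℝ →ₐ[ℝ] MvPolynomial (Fin 2) ℝ :=
  Polynomial.aeval (MvPolynomial.X 0)

/-- `Ξ1(t,x) = (x·b11(t) − a11(t))² − p(t)·(x·b12(t) − a12(t))²` as an element of
`ℝ[t,x]`. -/
noncomputable def Xi1TX (a11 a12 b11 b12 p : Polynomial ℝ) : MvPolynomial (Fin 2) ℝ :=
  (MvPolynomial.X 1 * toTX b11 - toTX a11) ^ 2 -
    toTX p * (MvPolynomial.X 1 * toTX b12 - toTX a12) ^ 2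

/-- The inclusion `ℝ[t] → ℝ[t,x,y]`, with `ℝ[t,x,y]` realized as
`MvPolynomial (Fin 3) ℝ` (variables `0 = t`, `1 = x`, `2 = y`). -/
noncomputable def toTXY' : Polynomial ℝ →ₐ[ℝ] MvPolynomial (Fin 3) ℝ :=
  Polynomial.aeval (MvPolynomial.X 0)

/-- `Ξ2(t,x,y)` as an element of `ℝ[t,x,y]`. -/
noncomputable def Xi2TXY (a11 a12 b11 b12 a21 a22 b21 b22 : Polynomial ℝ) :
    MvPolynomial (Fin 3) ℝ :=
  toTXY' (a22 * b11 - a21 * b12) * MvPolynomial.X 1 +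
    toTXY' (a11 * b22 - a12 * b21) * MvPolynomial.X 2 +
    toTXY' (b12 * b21 - b11 * b22) * (MvPolynomial.X 1 * MvPolynomial.X 2) -
    toTXY' (a11 * a22 - a12 * a21)

/-!
View `ℝ[t,x]` as `ℝ[t][x]`. There `Ξ2 = P + y·Q` with `P, Q` of degree at most one in `x`, and
`P, Q` are not both zero because `A2, B2` are coprime and `x` depends on `s`. Hence a common factor
`η` of positive `x`-degree is linear, `η = e·x + f` with `e ≠ 0`, and `Ξ1` vanishes at its root
`x = -f/e`: `(f·b11 + e·a11)² = p·(f·b12 + e·a12)²`. Since `p` is squarefree of positive degree both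
sides vanish, so `a11·b12 = a12·b11`, and then `A1, B1` share a factor of degree one in `s`.
-/

open Polynomial

section LinearPolynomials

variable {R : Type*} [CommRing R]

theorem C_mul_X_add_C_eq_zero_iff {s r : R} : C s * X + C r = 0 ↔ s = 0 ∧ r = 0 := by
  refine ⟨fun h => ⟨?_, ?_⟩, fun ⟨hs, hr⟩ => by simp [hs, hr]⟩
  · simpa using congrArg (coeff · 1) h
  · simpa using congrArg (coeff · 0) h

theorem eval₂_eq_zero_of_linear_dvd {K : Type*} [Field K] (φ : R →+* K) {e f : R} {q : R[X]}
    (he : φ e ≠ 0) (h : C e * X + C f ∣ q) : q.eval₂ φ (-φ f / φ e) = 0 := by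
  obtain ⟨g, rfl⟩ := h
  simp only [eval₂_mul, eval₂_add, eval₂_C, eval₂_X]
  rw [mul_div_cancel₀ _ he, neg_add_cancel, zero_mul]

variable [IsDomain R]

theorem C_add_X_mul_C_not_dvd_C {u v c : R} (hv : v ≠ 0) (hc : c ≠ 0) :
    ¬ C u + X * C v ∣ C c := by
  intro h
  have := natDegree_le_of_dvd h (C_ne_zero.mpr hc)
  rw [natDegree_C, add_comm, natDegree_add_C, natDegree_X_mul (C_ne_zero.mpr hv)] at this
  simp at this

theorem exists_eq_linear_of_dvd {q r : R[X]} (hq : 0 < q.natDegree) (h : q ∣ r) (hr : r ≠ 0)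
    (hr1 : r.natDegree ≤ 1) : ∃ e f : R, e ≠ 0 ∧ q = C e * X + C f := by
  have hq1 : q.natDegree = 1 := by have := natDegree_le_of_dvd h hr; omega
  refine ⟨q.coeff 1, q.coeff 0, ?_, eq_X_add_C_of_natDegree_le_one hq1.le⟩
  rw [← hq1]
  exact leadingCoeff_ne_zero.mpr (ne_zero_of_natDegree_gt hq)

theorem mul_ne_mul_of_isRelPrime_linear [DecompositionMonoid R[X]] {a a' b b' : R}
    (hAB : IsRelPrime (C a + X * C a') (C b + X * C b')) (hs : ¬(a' = 0 ∧ b' = 0)) :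
    a * b' ≠ a' * b := by
  intro hrel
  have hcross : C b' * (C a + X * C a') = C a' * (C b + X * C b') := by
    simp only [mul_add, ← C_mul, mul_comm b' a, hrel]
    ring
  by_cases ha' : a' = 0
  · have hb' : b' ≠ 0 := fun hb' => hs ⟨ha', hb'⟩
    exact C_add_X_mul_C_not_dvd_C hb' hb'
      (hAB.symm.dvd_of_dvd_mul_right (Dvd.intro_left _ hcross.symm))
  · exact C_add_X_mul_C_not_dvd_C ha' ha' (hAB.dvd_of_dvd_mul_right (Dvd.intro_left _ hcross))

-- The two polynomials are `Ξ2` at `y = 0` and the coefficient of `y` in `Ξ2`.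
theorem Xi2_linear_parts_ne_zero [DecompositionMonoid R[X]] {a11 a12 b11 b12 a21 a22 b21 b22 : R}
    (hco2 : IsRelPrime (C a21 + X * C a22) (C b21 + X * C b22))
    (h1 : ¬(a12 = 0 ∧ b12 = 0)) (h2 : ¬(a22 = 0 ∧ b22 = 0)) :
    C (a22 * b11 - a21 * b12) * X + C (a12 * a21 - a11 * a22) ≠ 0 ∨
      C (b12 * b21 - b11 * b22) * X + C (a11 * b22 - a12 * b21) ≠ 0 := by
  by_contra! h
  obtain ⟨⟨e1, e2⟩, ⟨e3, e4⟩⟩ :=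
    And.imp C_mul_X_add_C_eq_zero_iff.mp C_mul_X_add_C_eq_zero_iff.mp h
  refine mul_ne_mul_of_isRelPrime_linear hco2 h2 ?_
  rcases not_and_or.mp h1 with ha12 | hb12
  · exact mul_left_cancel₀ ha12 (by linear_combination b22 * e2 + a22 * e4)
  · exact mul_left_cancel₀ hb12 (by linear_combination (-b22) * e1 - a22 * e3)

theorem sq_eq_mul_sq_of_linear_dvd {a a' b b' p e f : R} (he : e ≠ 0)
    (h : C e * X + C f ∣ (X * C b - C a) ^ 2 - C p * (X * C b' - C a') ^ 2) :
    (f * b + e * a) ^ 2 = p * (f * b' + e * a') ^ 2 := by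
  set φ := algebraMap R (FractionRing R)
  have hφ : Function.Injective φ := IsFractionRing.injective R (FractionRing R)
  have hφe : φ e ≠ 0 := (map_ne_zero_iff φ hφ).mpr he
  have hroot := eval₂_eq_zero_of_linear_dvd φ hφe h
  simp only [eval₂_sub, eval₂_mul, eval₂_pow, eval₂_X, eval₂_C] at hroot
  apply hφ
  simp only [map_mul, map_add, map_pow]
  field_simp at hroot
  linear_combination hroot

end LinearPolynomials

-- Infinite descent on `deg u`: `p ∣ u`, and `u = p·w` turns the equation into `v² = p·w²`.
theorem eq_zero_of_sq_eq_mul_sq {K : Type*} [Field K] {p u v : K[X]} (hp : Squarefree p)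
    (hdeg : 0 < p.natDegree) (h : u ^ 2 = p * v ^ 2) : v = 0 := by
  have hp0 : p ≠ 0 := ne_zero_of_natDegree_gt hdeg
  induction hn : u.natDegree using Nat.strong_induction_on generalizing u v with
  | _ n ih =>
    by_contra hv
    obtain ⟨w, rfl⟩ : p ∣ u := (hp.dvd_pow_iff_dvd two_ne_zero).mp ⟨_, h⟩
    have hvw : v ^ 2 = p * w ^ 2 := mul_left_cancel₀ hp0 (by linear_combination -h)
    have hw : w ≠ 0 := by rintro rfl; exact hv (by simpa using hvw)
    have hdegs := congrArg natDegree hvw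
    rw [natDegree_pow, natDegree_mul hp0 (pow_ne_zero _ hw), natDegree_pow] at hdegs
    rw [natDegree_mul hp0 hw] at hn
    exact hw (ih v.natDegree (by omega) hvw rfl)

/-- `ℝ[t,x] → ℝ[t][x]`, with `x` as the outer variable. -/
noncomputable def toTXPoly : MvPolynomial (Fin 2) ℝ →ₐ[ℝ] ℝ[X][X] :=
  MvPolynomial.aeval ![C X, X]

theorem aeval_C_X_eq_C (q : ℝ[X]) : aeval (C X : ℝ[X][X]) q = C q := by
  rw [← algebraMap_eq (R := ℝ[X]), aeval_algebraMap_apply, aeval_X_left_apply]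

theorem toTXPoly_toTX (q : ℝ[X]) : toTXPoly (toTX q) = C q := by
  rw [toTX, ← aeval_algHom_apply, toTXPoly, MvPolynomial.aeval_X]
  exact aeval_C_X_eq_C q

theorem toTXPoly_X_one : toTXPoly (MvPolynomial.X 1) = X := by
  simp [toTXPoly]

theorem aevalTower_comp_toTXPoly :
    (aevalTower toTX (MvPolynomial.X 1)).comp toTXPoly = AlgHom.id ℝ _ := by
  apply MvPolynomial.algHom_ext
  intro i
  fin_cases i <;> simp [toTXPoly, toTX]

theorem degreeOf_one_toTX (q : ℝ[X]) : MvPolynomial.degreeOf 1 (toTX q) = 0 := by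
  induction q using Polynomial.induction_on with
  | C a => simp [toTX]
  | add p q hp hq =>
    have := MvPolynomial.degreeOf_add_le 1 (toTX p) (toTX q)
    rw [map_add]
    omega
  | monomial n a ih =>
    rw [pow_succ, ← mul_assoc, map_mul, toTX, aeval_X,
      MvPolynomial.degreeOf_mul_X_of_ne _ (by decide)]
    exact ih

theorem natDegree_toTXPoly_pos {η : MvPolynomial (Fin 2) ℝ}
    (hη : 0 < MvPolynomial.degreeOf 1 η) : 0 < (toTXPoly η).natDegree := by
  by_contra! h
  obtain ⟨c, hc⟩ := natDegree_eq_zero.mp (Nat.le_zero.mp h)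
  have hηc : η = toTX c := by
    rw [← AlgHom.id_apply (R := ℝ) η, ← aevalTower_comp_toTXPoly, AlgHom.comp_apply, ← hc,
      aevalTower_C]
  rw [hηc, degreeOf_one_toTX] at hη
  exact hη.false

theorem toTXPoly_Xi1TX (a11 a12 b11 b12 p : ℝ[X]) :
    toTXPoly (Xi1TX a11 a12 b11 b12 p) =
      (X * C b11 - C a11) ^ 2 - C p * (X * C b12 - C a12) ^ 2 := by
  simp only [Xi1TX, map_sub, map_mul, map_pow, toTXPoly_toTX, toTXPoly_X_one]

theorem aeval_toTXY' (c : ℝ[X][X]) (q : ℝ[X]) :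
    MvPolynomial.aeval ![C X, X, c] (toTXY' q) = C q := by
  rw [toTXY', ← aeval_algHom_apply, MvPolynomial.aeval_X]
  exact aeval_C_X_eq_C q

theorem aeval_rename_castSucc (η : MvPolynomial (Fin 2) ℝ) (c : ℝ[X][X]) :
    MvPolynomial.aeval ![C X, X, c] (MvPolynomial.rename Fin.castSucc η) = toTXPoly η := by
  have hvars : ![C X, X, c] ∘ Fin.castSucc = ![C X, X] := by
    funext i
    fin_cases i <;> rfl
  rw [MvPolynomial.aeval_rename, hvars, toTXPoly]

theorem aeval_Xi2TXY (a11 a12 b11 b12 a21 a22 b21 b22 : ℝ[X]) (c : ℝ[X][X]) :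
    MvPolynomial.aeval ![C X, X, c] (Xi2TXY a11 a12 b11 b12 a21 a22 b21 b22) =
      C (a22 * b11 - a21 * b12) * X + C (a12 * a21 - a11 * a22) +
        c * (C (b12 * b21 - b11 * b22) * X + C (a11 * b22 - a12 * b21)) := by
  simp only [Xi2TXY, map_add, map_sub, map_mul, aeval_toTXY', MvPolynomial.aeval_X,
    Matrix.cons_val_zero, Matrix.cons_val_one, Matrix.cons_val_two, Matrix.head_cons,
    Matrix.tail_cons]
  ring

theorem toTXPoly_dvd_of_rename_dvd_Xi2TXY {a11 a12 b11 b12 a21 a22 b21 b22 : ℝ[X]}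
    {η : MvPolynomial (Fin 2) ℝ}
    (h : MvPolynomial.rename Fin.castSucc η ∣ Xi2TXY a11 a12 b11 b12 a21 a22 b21 b22) :
    toTXPoly η ∣ C (a22 * b11 - a21 * b12) * X + C (a12 * a21 - a11 * a22) ∧
      toTXPoly η ∣ C (b12 * b21 - b11 * b22) * X + C (a11 * b22 - a12 * b21) := by
  have hy : ∀ c : ℝ[X][X], toTXPoly η ∣
      C (a22 * b11 - a21 * b12) * X + C (a12 * a21 - a11 * a22) +
        c * (C (b12 * b21 - b11 * b22) * X + C (a11 * b22 - a12 * b21)) := fun c => by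
    have := map_dvd (MvPolynomial.aeval ![C X, X, c]) h
    rwa [aeval_rename_castSucc, aeval_Xi2TXY] at this
  have h0 := hy 0
  rw [zero_mul, add_zero] at h0
  exact ⟨h0, (dvd_add_right h0).mp (by simpa only [one_mul] using hy 1)⟩

/-- If `A1, B1` are coprime in `ℝ[t,s]`, `A2, B2` are coprime in `ℝ[t,s]`, and both
`x(t,s)` and `y(t,s)` explicitly depend on `s`, then `Ξ1` and `Ξ2` have no common
irreducible factor `η ∈ ℝ[t,x]` of positive degree in `t` and positive degree in `x`
(where `ℝ[t,x]` is embedded in `ℝ[t,x,y]` via renaming of variables). -/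
theorem no_common_tx_factor (a11 a12 b11 b12 a21 a22 b21 b22 p : Polynomial ℝ)
    (hp : Squarefree p) (hdeg : 1 ≤ p.natDegree)
    (hco1 : ∀ d : Polynomial (Polynomial ℝ),
      d ∣ (Polynomial.C a11 + Polynomial.X * Polynomial.C a12) →
      d ∣ (Polynomial.C b11 + Polynomial.X * Polynomial.C b12) → IsUnit d)
    (hco2 : ∀ d : Polynomial (Polynomial ℝ),
      d ∣ (Polynomial.C a21 + Polynomial.X * Polynomial.C a22) →
      d ∣ (Polynomial.C b21 + Polynomial.X * Polynomial.C b22) → IsUnit d)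
    (h1 : ¬(a12 = 0 ∧ b12 = 0)) (h2 : ¬(a22 = 0 ∧ b22 = 0)) :
    ¬∃ η : MvPolynomial (Fin 2) ℝ, Irreducible η ∧
        0 < MvPolynomial.degreeOf 0 η ∧ 0 < MvPolynomial.degreeOf 1 η ∧
        η ∣ Xi1TX a11 a12 b11 b12 p ∧
        MvPolynomial.rename Fin.castSucc η ∣
          Xi2TXY a11 a12 b11 b12 a21 a22 b21 b22 := by
  rintro ⟨η, -, -, hx, hXi1, hXi2⟩
  obtain ⟨hP, hQ⟩ := toTXPoly_dvd_of_rename_dvd_Xi2TXY hXi2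
  obtain ⟨e, f, he, hη⟩ : ∃ e f : ℝ[X], e ≠ 0 ∧ toTXPoly η = C e * X + C f := by
    have hpos := natDegree_toTXPoly_pos hx
    rcases Xi2_linear_parts_ne_zero hco2 h1 h2 with hne | hne
    · exact exists_eq_linear_of_dvd hpos hP hne natDegree_linear_le
    · exact exists_eq_linear_of_dvd hpos hQ hne natDegree_linear_le
  have hsq := sq_eq_mul_sq_of_linear_dvd he
    (by simpa only [hη, toTXPoly_Xi1TX] using map_dvd toTXPoly hXi1)
  have hv := eq_zero_of_sq_eq_mul_sq hp hdeg hsq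
  have hu : f * b11 + e * a11 = 0 := pow_eq_zero_iff two_ne_zero |>.mp (by rw [hsq, hv]; ring)
  exact mul_ne_mul_of_isRelPrime_linear hco1 h1
    (mul_left_cancel₀ he (by linear_combination b12 * hu - b11 * hv))
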